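/- Let K_{n_1,...,n_k} be a complete k-partite graph with exactly l focal vertices (i.e., exactly l of the parts have size 1). Then ⌈(2k−l)/2⌉ ≤ box(M_2(K_{n_1,...,n_k})) ≤ min{k, ⌈(2k−l)/2⌉ + 1}. In particular, if l is odd or l = 0, then box(M_2(K_{n_1,...,n_k})) = ⌈(2k−l)/2⌉. -/

import Mathlib

open SimpleGraph

/-- `G` has a representation by axis-parallel boxes in `ℝ^k`: distinct vertices are
adjacent iff their boxes intersect. -/
def HasBoxRep {V : Type*} (G : SimpleGraph V) (k : ℕ) : Prop :=
  ∃ lo hi : V → Fin k → ℝ,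
    ∀ u v : V, u ≠ v →
      (G.Adj u v ↔ ∀ i, max (lo u i) (lo v i) ≤ min (hi u i) (hi v i))

/-- The boxicity of a graph: the least `k` such that `G` has a box representation
in `ℝ^k` (0 for complete graphs). -/
noncomputable def boxicity {V : Type*} (G : SimpleGraph V) : ℕ :=
  sInf {k | HasBoxRep G k}

/-- An interval graph: an intersection graph of closed intervals on the real line. -/
def IsIntervalGraph {V : Type*} (G : SimpleGraph V) : Prop := HasBoxRep G 1

/-- A cointerval graph: the complement is an interval graph. -/
def Cointerval {V : Type*} (G : SimpleGraph V) : Prop := IsIntervalGraph Gᶜ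

/-- The generalized Mycielski graph `M_r(G)`: vertex `none` is the apex `z`,
`some (v, i)` is the copy `v_{i+1}` of `v` in level `i`.  Level `0` induces a copy of `G`,
consecutive levels are joined by `u_{i-1}v_i, v_{i-1}u_i` for `uv ∈ E(G)`, and `z`
is joined to all vertices of the top level `r-1`. -/
def genMycielski {V : Type*} (G : SimpleGraph V) (r : ℕ) :
    SimpleGraph (Option (V × Fin r)) :=
  SimpleGraph.fromRel (fun a b =>
    match a, b with
    | some (u, i), some (v, j) =>
        (i = j ∧ (i : ℕ) = 0 ∧ G.Adj u v) ∨ ((j : ℕ) = (i : ℕ) + 1 ∧ G.Adj u v)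
    | some (_, i), none => (i : ℕ) = r - 1
    | none, _ => False)

/-- A focal (universal) vertex: adjacent to all other vertices. -/
def IsFocal {V : Type*} (G : SimpleGraph V) (v : V) : Prop :=
  ∀ w, w ≠ v → G.Adj v w

/-- `G` with `n` additional universal vertices, i.e. the `n`-th focalization `G^{fⁿ}`. -/
def addUniversal {V : Type*} (G : SimpleGraph V) (n : ℕ) :
    SimpleGraph (V ⊕ Fin n) :=
  SimpleGraph.fromRel (fun a b =>
    match a, b with
    | Sum.inl u, Sum.inl v => G.Adj u v
    | _, _ => True)

/-- The edge clique cover number: the minimum number of cliques covering all edges. -/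
noncomputable def edgeCliqueCoverNumber {V : Type*} (G : SimpleGraph V) : ℕ :=
  sInf {k | ∃ f : Fin k → Set V, (∀ i, G.IsClique (f i)) ∧
    ∀ u v, G.Adj u v → ∃ i, u ∈ f i ∧ v ∈ f i}

/-- Disjoint union of two graphs. -/
def disjUnionGraph {α β : Type*} (G : SimpleGraph α) (H : SimpleGraph β) :
    SimpleGraph (α ⊕ β) :=
  SimpleGraph.fromRel (fun a b =>
    match a, b with
    | Sum.inl u, Sum.inl v => G.Adj u v
    | Sum.inr u, Sum.inr v => H.Adj u v
    | _, _ => False)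

/-- The complete multipartite graph with parts `V i`. -/
def completeMultipartite {ι : Type*} (V : ι → Type*) : SimpleGraph (Σ i, V i) where
  Adj a b := a.1 ≠ b.1
  symm := ⟨fun _ _ h => Ne.symm h⟩
  loopless := ⟨fun _ h => h rfl⟩

/-!
In a box representation of `M₂(K_{n₁,…,n_k})`, every part `j` needs a coordinate in which two
non-adjacent vertices of the part get disjoint intervals. For a part with two vertices `u, v` take
their copies on level `0`: all vertices of levels `0` and `1` outside the part are adjacent to both,
so their intervals contain the gap between those of `u` and `v` and pairwise meet. Hence this
coordinate serves no other part. For a singleton part `{v}` take the two copies `v₀, v₁`; the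
interval of `v₁` lies to the left or to the right of that of `v₀`, and two singleton parts on the
same side of one coordinate contradict the cross adjacencies `v₀ w₁`, `w₀ v₁`. So a coordinate
serves at most two singleton parts, and there are at least `(k - l) + ⌈l / 2⌉` coordinates.

Conversely, one coordinate per part is a representation; so is one coordinate per larger part,
one per pair of singleton parts, and one that separates the apex from level `0` and also serves a
left-over singleton part.
-/

open Finset

-- The pair `(lo, hi)` stands for the closed interval `[lo, hi]`, as in `HasBoxRep`.
def Meets (I J : ℝ × ℝ) : Prop := max I.1 J.1 ≤ min I.2 J.2

section Meets

variable {I J A B P Q A₁ B₁ A₂ B₂ : ℝ × ℝ}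

theorem meets_iff : Meets I J ↔ I.1 ≤ I.2 ∧ J.1 ≤ I.2 ∧ I.1 ≤ J.2 ∧ J.1 ≤ J.2 := by
  simp only [Meets, max_le_iff, le_min_iff, and_assoc]

theorem Meets.symm (h : Meets I J) : Meets J I := by
  rwa [Meets, max_comm, min_comm]

theorem not_meets_of_lt (h : I.2 < J.1) : ¬Meets I J := by
  rw [meets_iff]
  intro h'
  linarith [h'.2.1]

theorem not_meets_of_ne {x y : ℝ} (h : x ≠ y) : ¬Meets (x, x) (y, y) := by
  rcases h.lt_or_gt with h | h
  · exact not_meets_of_lt h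
  · exact fun h' => not_meets_of_lt h h'.symm

theorem lt_or_lt_of_not_meets (hI : I.1 ≤ I.2) (hJ : J.1 ≤ J.2) (h : ¬Meets I J) :
    I.2 < J.1 ∨ J.2 < I.1 := by
  rw [meets_iff] at h
  by_contra! h'
  exact h ⟨hI, h'.1, h'.2, hJ⟩

-- `P` and `Q` both contain the gap between `A` and `B`.
theorem meets_of_not_meets (hAB : ¬Meets A B) (hPA : Meets P A) (hPB : Meets P B)
    (hQA : Meets Q A) (hQB : Meets Q B) : Meets P Q := by
  rw [meets_iff] at hPA hPB hQA hQB ⊢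
  rcases lt_or_lt_of_not_meets hPA.2.2.2 hPB.2.2.2 hAB with h | h <;>
    exact ⟨hPA.1, by linarith, by linarith, hQA.1⟩

theorem not_meets_of_same_side (h₁ : ¬Meets A₁ B₁) (h₂ : ¬Meets A₂ B₂)
    (hside : A₁.2 < B₁.1 ↔ A₂.2 < B₂.1) (h₁₂ : Meets A₁ B₂) : ¬Meets A₂ B₁ := by
  intro h₂₁
  rw [meets_iff] at h₁₂ h₂₁
  rcases lt_or_lt_of_not_meets h₁₂.1 h₂₁.2.2.2 h₁ with o₁ | o₁ <;>
  rcases lt_or_lt_of_not_meets h₂₁.1 h₁₂.2.2.2 h₂ with o₂ | o₂ <;>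
  first | linarith | linarith [hside.1 o₁] | linarith [hside.2 o₂]

end Meets

def IsBoxRep {κ V : Type*} (G : SimpleGraph V) (I : κ → V → ℝ × ℝ) : Prop :=
  ∀ u v, u ≠ v → (G.Adj u v ↔ ∀ i, Meets (I i u) (I i v))

def Separated {κ V : Type*} (I : κ → V → ℝ × ℝ) (u v : V) : Prop :=
  ∃ i, ¬Meets (I i u) (I i v)

section BoxRep

variable {κ V : Type*} {G : SimpleGraph V} {I : κ → V → ℝ × ℝ} {k : ℕ}

theorem Separated.symm {u v : V} (h : Separated I u v) : Separated I v u :=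
  let ⟨i, hi⟩ := h
  ⟨i, fun h' => hi h'.symm⟩

theorem IsBoxRep.of_adj_of_not_adj (hadj : ∀ u v, G.Adj u v → ∀ i, Meets (I i u) (I i v))
    (hsep : ∀ u v, u ≠ v → ¬G.Adj u v → Separated I u v) : IsBoxRep G I := by
  refine fun u v huv => ⟨hadj u v, fun h => ?_⟩
  by_contra hnadj
  obtain ⟨i, hi⟩ := hsep u v huv hnadj
  exact hi (h i)

theorem IsBoxRep.meets (hI : IsBoxRep G I) {u v : V} (h : G.Adj u v) (i : κ) :
    Meets (I i u) (I i v) :=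
  (hI u v h.ne).1 h i

theorem IsBoxRep.separated (hI : IsBoxRep G I) {u v : V} (hne : u ≠ v) (h : ¬G.Adj u v) :
    Separated I u v := by
  by_contra! h'
  exact h ((hI u v hne).2 fun i => by_contra fun hi => h' ⟨i, hi⟩)

theorem IsBoxRep.meets_of_common_neighbors (hI : IsBoxRep G I) {i : κ} {x y p q : V}
    (hxy : ¬Meets (I i x) (I i y)) (hpx : G.Adj p x) (hpy : G.Adj p y)
    (hqx : G.Adj q x) (hqy : G.Adj q y) : Meets (I i p) (I i q) :=
  meets_of_not_meets hxy (hI.meets hpx i) (hI.meets hpy i) (hI.meets hqx i) (hI.meets hqy i)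

theorem IsBoxRep.hasBoxRep [Fintype κ] (hI : IsBoxRep G I) (hk : Fintype.card κ ≤ k) :
    HasBoxRep G k := by
  obtain ⟨e⟩ : Nonempty (κ ↪ Fin k) := Function.Embedding.nonempty_of_card_le (by simpa using hk)
  let J : Fin k → V → ℝ × ℝ := fun d v => Function.extend e (fun i => I i v) (fun _ => 0) d
  have hJ : ∀ u v, (∀ d, Meets (J d u) (J d v)) ↔ ∀ i, Meets (I i u) (I i v) := by
    refine fun u v => ⟨fun h i => ?_, fun h d => ?_⟩
    · simpa [J, e.injective.extend_apply] using h (e i)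
    · by_cases hd : ∃ i, e i = d
      · obtain ⟨i, rfl⟩ := hd
        simpa [J, e.injective.extend_apply] using h i
      · simp [J, Function.extend_apply' _ _ _ hd, Meets]
  exact ⟨fun v d => (J d v).1, fun v d => (J d v).2,
    fun u v huv => (hI u v huv).trans (hJ u v).symm⟩

theorem HasBoxRep.exists_isBoxRep (h : HasBoxRep G k) : ∃ I : Fin k → V → ℝ × ℝ, IsBoxRep G I :=
  let ⟨lo, hi, h⟩ := h
  ⟨fun i v => (lo v i, hi v i), h⟩

theorem boxicity_le (h : HasBoxRep G k) : boxicity G ≤ k := Nat.sInf_le h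

theorem le_boxicity {b : ℕ} (hk : HasBoxRep G k) (h : ∀ m, HasBoxRep G m → b ≤ m) :
    b ≤ boxicity G :=
  le_csInf ⟨k, hk⟩ h

end BoxRep

section Mycielski

variable {V : Type*} {G : SimpleGraph V}

theorem genMycielski_two_adj_some_some {u v : V} {s t : Fin 2} :
    (genMycielski G 2).Adj (some (u, s)) (some (v, t)) ↔ G.Adj u v ∧ (s = 0 ∨ t = 0) := by
  fin_cases s <;> fin_cases t <;> simp [genMycielski, G.adj_comm]
  exact G.ne_of_adj

theorem genMycielski_two_adj_none_some {v : V} {t : Fin 2} :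
    (genMycielski G 2).Adj none (some (v, t)) ↔ t = 1 := by
  fin_cases t <;> simp [genMycielski]

theorem genMycielski_two_adj_zero {u v : V} (h : G.Adj u v) (t : Fin 2) :
    (genMycielski G 2).Adj (some (u, 0)) (some (v, t)) :=
  genMycielski_two_adj_some_some.2 ⟨h, .inl rfl⟩

theorem genMycielski_two_forall_adj {P : Option (V × Fin 2) → Option (V × Fin 2) → Prop}
    (hsymm : ∀ x y, P x y → P y x)
    (h00 : ∀ u v, G.Adj u v → P (some (u, 0)) (some (v, 0)))
    (h01 : ∀ u v, G.Adj u v → P (some (u, 0)) (some (v, 1)))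
    (hapex : ∀ v, P none (some (v, 1))) :
    ∀ x y, (genMycielski G 2).Adj x y → P x y := by
  rintro (_ | ⟨u, s⟩) (_ | ⟨v, t⟩) h
  · exact absurd h (SimpleGraph.irrefl _)
  · obtain rfl := genMycielski_two_adj_none_some.1 h
    exact hapex v
  · obtain rfl := genMycielski_two_adj_none_some.1 h.symm
    exact hsymm _ _ (hapex u)
  · obtain ⟨huv, hst⟩ := genMycielski_two_adj_some_some.1 h
    fin_cases s <;> fin_cases t <;> simp at hst
    · exact h00 u v huv
    · exact h01 u v huv
    · exact hsymm _ _ (h01 v u huv.symm)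

theorem genMycielski_two_forall_not_adj {P : Option (V × Fin 2) → Option (V × Fin 2) → Prop}
    (hsymm : ∀ x y, P x y → P y x)
    (hG : ∀ u v s t, ¬G.Adj u v → (u, s) ≠ (v, t) → P (some (u, s)) (some (v, t)))
    (h11 : ∀ u v, G.Adj u v → P (some (u, 1)) (some (v, 1)))
    (hapex : ∀ v, P none (some (v, 0))) :
    ∀ x y, x ≠ y → ¬(genMycielski G 2).Adj x y → P x y := by
  rintro (_ | ⟨u, s⟩) (_ | ⟨v, t⟩) hne h
  · exact absurd rfl hne
  · rw [genMycielski_two_adj_none_some] at h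
    obtain rfl : t = 0 := by omega
    exact hapex v
  · rw [adj_comm, genMycielski_two_adj_none_some] at h
    obtain rfl : s = 0 := by omega
    exact hsymm _ _ (hapex u)
  · rw [genMycielski_two_adj_some_some] at h
    by_cases huv : G.Adj u v
    · obtain ⟨rfl, rfl⟩ : s = 1 ∧ t = 1 := by
        simp only [huv, true_and, not_or] at h
        omega
      exact h11 u v huv
    · exact hG u v s t huv fun e => hne (congrArg some e)

end Mycielski

section Coordinates

variable {ι : Type*}

section Sigma

variable {n : ι → ℕ} {u v : Σ i, Fin (n i)}

theorem cast_snd_nonneg (u : Σ i, Fin (n i)) : (0 : ℝ) ≤ (u.2 : ℕ) := Nat.cast_nonneg _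

theorem cast_snd_add_one_le (u : Σ i, Fin (n i)) : ((u.2 : ℕ) : ℝ) + 1 ≤ n u.1 := by
  exact_mod_cast u.2.isLt

theorem cast_snd_ne_of_fst_eq (h : u.1 = v.1) (hne : u ≠ v) : ((u.2 : ℕ) : ℝ) ≠ (v.2 : ℕ) := by
  obtain ⟨i, x⟩ := u
  obtain ⟨j, y⟩ := v
  obtain rfl : i = j := h
  exact fun hxy => hne (Sigma.ext rfl (heq_of_eq (Fin.ext (by exact_mod_cast hxy))))

theorem eq_of_fst_eq_of_eq_one (h : u.1 = v.1) (hu : n u.1 = 1) : u = v := by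
  obtain ⟨i, x⟩ := u
  obtain ⟨j, y⟩ := v
  obtain rfl : i = j := h
  exact Sigma.ext rfl (heq_of_eq (Fin.ext (by have := x.isLt; have := y.isLt; simp_all)))

end Sigma

variable [DecidableEq ι]

section PairAndApex

variable {V : ι → Type*}

-- The singleton parts `a` and `b` sit at the two ends of the apex's interval `[0, 3]`.
def pairCoord (a b : ι) : Option ((Σ i, V i) × Fin 2) → ℝ × ℝ
  | none => (0, 3)
  | some (u, 0) => if u.1 = a then (1, 3) else if u.1 = b then (0, 2) else (0, 3)
  | some (u, 1) => if u.1 = a then (0, 0) else if u.1 = b then (3, 3) else (2, 2)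

def apexCoord (c : ι) : Option ((Σ i, V i) × Fin 2) → ℝ × ℝ
  | none => (0, 0)
  | some (u, 0) => if u.1 = c then (2, 2) else (1, 2)
  | some (u, 1) => if u.1 = c then (0, 1) else (0, 2)

theorem pairCoord_meets_of_adj (a b : ι) :
    ∀ x y, (genMycielski (completeMultipartite V) 2).Adj x y →
      Meets (pairCoord a b x) (pairCoord a b y) := by
  apply genMycielski_two_forall_adj (fun _ _ => Meets.symm)
  all_goals
    intros
    simp only [pairCoord, meets_iff]
    split_ifs <;> grind [completeMultipartite]

theorem apexCoord_meets_of_adj (c : ι) :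
    ∀ x y, (genMycielski (completeMultipartite V) 2).Adj x y →
      Meets (apexCoord c x) (apexCoord c y) := by
  apply genMycielski_two_forall_adj (fun _ _ => Meets.symm)
  all_goals
    intros
    simp only [apexCoord, meets_iff]
    split_ifs <;> grind [completeMultipartite]

variable {a b c : ι} {u v : Σ i, V i}

theorem pairCoord_not_meets_zero_one (hu : u.1 = a ∨ u.1 = b) :
    ¬Meets (pairCoord a b (some (u, 0))) (pairCoord a b (some (u, 1))) := by
  simp only [pairCoord, meets_iff]
  split_ifs <;> norm_num
  tauto

theorem pairCoord_not_meets_one_one (hu : u.1 = a ∨ u.1 = b) (huv : u.1 ≠ v.1) :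
    ¬Meets (pairCoord a b (some (u, 1))) (pairCoord a b (some (v, 1))) := by
  simp only [pairCoord, meets_iff]
  split_ifs <;> norm_num <;> simp_all

theorem apexCoord_not_meets_zero_one (hu : u.1 = c) :
    ¬Meets (apexCoord c (some (u, 0))) (apexCoord c (some (u, 1))) := by
  simp [apexCoord, meets_iff, hu]

theorem apexCoord_not_meets_none_zero :
    ¬Meets (apexCoord (V := V) c none) (apexCoord c (some (v, 0))) := by
  simp only [apexCoord, meets_iff]
  split_ifs <;> norm_num

end PairAndApex

variable {n : ι → ℕ}

-- Part `j` becomes distinct points, positive on level `0` and negative on level `1`; the long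
-- intervals of all other vertices meet these points exactly where adjacency requires it.
def partCoord (n : ι → ℕ) (j : ι) : Option ((Σ i, Fin (n i)) × Fin 2) → ℝ × ℝ
  | none => (-n j, 0)
  | some (u, 0) => if u.1 = j then ((u.2 : ℕ) + 1, (u.2 : ℕ) + 1) else (-n j, n j)
  | some (u, 1) => if u.1 = j then (-((u.2 : ℕ) + 1), -((u.2 : ℕ) + 1)) else (0, n j)

theorem partCoord_meets_of_adj (j : ι) :
    ∀ x y, (genMycielski (completeMultipartite fun i => Fin (n i)) 2).Adj x y →
      Meets (partCoord n j x) (partCoord n j y) := by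
  apply genMycielski_two_forall_adj (fun _ _ => Meets.symm)
  · intro u v (huv : u.1 ≠ v.1)
    have := cast_snd_add_one_le u; have := cast_snd_add_one_le v
    have := cast_snd_nonneg u; have := cast_snd_nonneg v
    simp only [partCoord, meets_iff]
    split_ifs <;> grind
  · intro u v (huv : u.1 ≠ v.1)
    have := cast_snd_add_one_le u; have := cast_snd_add_one_le v
    have := cast_snd_nonneg u; have := cast_snd_nonneg v
    simp only [partCoord, meets_iff]
    split_ifs <;> grind
  · intro v
    have := cast_snd_add_one_le v; have := cast_snd_nonneg v
    simp only [partCoord, meets_iff]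
    split_ifs <;> grind

variable {j : ι} {u v : Σ i, Fin (n i)}

theorem partCoord_not_meets_of_fst_eq (hu : u.1 = j) (hv : v.1 = j) :
    ∀ {s t : Fin 2}, (u, s) ≠ (v, t) →
      ¬Meets (partCoord n j (some (u, s))) (partCoord n j (some (v, t)))
  | 0, 0, hne => by
    simp only [partCoord, hu, hv, if_true]
    refine not_meets_of_ne fun h =>
      cast_snd_ne_of_fst_eq (hu.trans hv.symm) (fun e => hne (by rw [e])) ?_
    linarith
  | 0, 1, _ => by
    simp only [partCoord, hu, hv, if_true]
    exact fun h => not_meets_of_lt (by simp only; linarith [cast_snd_nonneg u, cast_snd_nonneg v])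
      h.symm
  | 1, 0, _ => by
    simp only [partCoord, hu, hv, if_true]
    exact not_meets_of_lt (by simp only; linarith [cast_snd_nonneg u, cast_snd_nonneg v])
  | 1, 1, hne => by
    simp only [partCoord, hu, hv, if_true]
    refine not_meets_of_ne fun h =>
      cast_snd_ne_of_fst_eq (hu.trans hv.symm) (fun e => hne (by rw [e])) ?_
    linarith

theorem partCoord_not_meets_one_one (hu : u.1 = j) (hv : v.1 ≠ j) :
    ¬Meets (partCoord n j (some (u, 1))) (partCoord n j (some (v, 1))) := by
  simp only [partCoord, hu, hv, if_true, if_false]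
  exact not_meets_of_lt (by simp only; linarith [cast_snd_nonneg u])

theorem partCoord_not_meets_none_zero (hv : v.1 = j) :
    ¬Meets (partCoord n j none) (partCoord n j (some (v, 0))) := by
  simp only [partCoord, hv, if_true]
  exact not_meets_of_lt (by simp only; linarith [cast_snd_nonneg v])

theorem isBoxRep_partCoord :
    IsBoxRep (genMycielski (completeMultipartite fun i => Fin (n i)) 2) (partCoord n) :=
  .of_adj_of_not_adj (fun x y h j => partCoord_meets_of_adj j x y h) <|
    genMycielski_two_forall_not_adj (fun _ _ => Separated.symm)
      (fun u _ _ _ huv hne => ⟨u.1, partCoord_not_meets_of_fst_eq rfl (not_not.1 huv).symm hne⟩)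
      (fun u _ huv => ⟨u.1, partCoord_not_meets_one_one rfl (Ne.symm huv)⟩)
      (fun v => ⟨v.1, partCoord_not_meets_none_zero rfl⟩)

theorem hasBoxRep_card [Fintype ι] :
    HasBoxRep (genMycielski (completeMultipartite fun i => Fin (n i)) 2) (Fintype.card ι) :=
  isBoxRep_partCoord.hasBoxRep le_rfl

variable {m : ℕ}

def coverCoords (n : ι → ℕ) (a b : Fin m → ι) (c : ι) :
    {j // n j ≠ 1} ⊕ Fin m ⊕ Unit → Option ((Σ i, Fin (n i)) × Fin 2) → ℝ × ℝ :=
  Sum.elim (fun j => partCoord n j) (Sum.elim (fun p => pairCoord (a p) (b p)) fun _ => apexCoord c)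

theorem isBoxRep_coverCoords {a b : Fin m → ι} {c : ι}
    (hcover : ∀ j, n j = 1 → (∃ p, j = a p ∨ j = b p) ∨ j = c) :
    IsBoxRep (genMycielski (completeMultipartite fun i => Fin (n i)) 2) (coverCoords n a b c) := by
  have hsingle : ∀ u : Σ i, Fin (n i), n u.1 = 1 →
      Separated (coverCoords n a b c) (some (u, 0)) (some (u, 1)) := by
    intro u hu
    rcases hcover u.1 hu with ⟨p, hp⟩ | hc
    · exact ⟨.inr (.inl p), pairCoord_not_meets_zero_one hp⟩
    · exact ⟨.inr (.inr ()), apexCoord_not_meets_zero_one hc⟩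
  have hpaired : ∀ u v : Σ i, Fin (n i), u.1 ≠ v.1 → (∃ p, u.1 = a p ∨ u.1 = b p) →
      Separated (coverCoords n a b c) (some (u, 1)) (some (v, 1)) :=
    fun u v huv ⟨p, hp⟩ => ⟨.inr (.inl p), pairCoord_not_meets_one_one hp huv⟩
  refine .of_adj_of_not_adj ?_
    (genMycielski_two_forall_not_adj (fun _ _ => Separated.symm) ?_ ?_ ?_)
  · rintro x y h (j | p | -)
    exacts [partCoord_meets_of_adj _ x y h, pairCoord_meets_of_adj _ _ x y h,
      apexCoord_meets_of_adj _ x y h]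
  · intro u v s t (huv : ¬u.1 ≠ v.1) hne
    rw [not_not] at huv
    by_cases hu : n u.1 = 1
    · obtain rfl := eq_of_fst_eq_of_eq_one huv hu
      exact match s, t, hne with
        | 0, 0, h => absurd rfl h
        | 0, 1, _ => hsingle u hu
        | 1, 0, _ => (hsingle u hu).symm
        | 1, 1, h => absurd rfl h
    · exact ⟨.inl ⟨u.1, hu⟩, partCoord_not_meets_of_fst_eq rfl huv.symm hne⟩
  · intro u v (huv : u.1 ≠ v.1)
    by_cases hu : n u.1 = 1
    · by_cases hv : n v.1 = 1
      · rcases hcover u.1 hu with hpu | hcu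
        · exact hpaired u v huv hpu
        · rcases hcover v.1 hv with hpv | hcv
          · exact (hpaired v u huv.symm hpv).symm
          · exact absurd (hcu.trans hcv.symm) huv
      · exact ⟨.inl ⟨v.1, hv⟩, fun h => partCoord_not_meets_one_one (u := v) rfl huv h.symm⟩
    · exact ⟨.inl ⟨u.1, hu⟩, partCoord_not_meets_one_one rfl (Ne.symm huv)⟩
  · exact fun v => ⟨.inr (.inr ()), apexCoord_not_meets_none_zero⟩

theorem hasBoxRep_of_cover [Fintype ι] {a b : Fin m → ι} {c : ι}
    (hcover : ∀ j, n j = 1 → (∃ p, j = a p ∨ j = b p) ∨ j = c) :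
    HasBoxRep (genMycielski (completeMultipartite fun i => Fin (n i)) 2)
      (#{j | n j ≠ 1} + m + 1) :=
  (isBoxRep_coverCoords hcover).hasBoxRep (by simp [Fintype.card_subtype, add_assoc])

end Coordinates
theorem Finset.exists_pairs_cover {ι : Type*} {T : Finset ι} {l : ℕ} (hT : #T = l) (hl : 1 ≤ l) :
    ∃ (a b : Fin (l / 2) → ι) (c : ι), ∀ j ∈ T, (∃ p, j = a p ∨ j = b p) ∨ j = c := by
  let σ : Fin l → ι := fun t => ((T.equivFinOfCardEq hT).symm t : ι)
  refine ⟨fun p => σ ⟨2 * p, by omega⟩, fun p => σ ⟨2 * p + 1, by omega⟩, σ ⟨l - 1, by omega⟩,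
    fun j hj => ?_⟩
  obtain ⟨t, rfl⟩ : ∃ t, σ t = j := ⟨T.equivFinOfCardEq hT ⟨j, hj⟩, by simp [σ]⟩
  have := t.isLt
  by_cases ht : (t : ℕ) < 2 * (l / 2)
  · refine .inl ⟨⟨t / 2, by omega⟩, ?_⟩
    rcases Nat.mod_two_eq_zero_or_one t with h | h
    · exact .inl (congrArg σ (Fin.ext (by simp only; omega)))
    · exact .inr (congrArg σ (Fin.ext (by simp only; omega)))
  · exact .inr (congrArg σ (Fin.ext (by simp only; omega)))

theorem Finset.card_add_half_le_card {ι κ : Type*} [DecidableEq κ] [Fintype κ] {g : ι → κ}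
    {S T : Finset ι} (hST : Disjoint S T) (hS : ∀ j ∈ S, ∀ j', j ≠ j' → g j ≠ g j')
    (hT : ∀ d, #{j ∈ T | g j = d} ≤ 2) : #S + (#T + 1) / 2 ≤ Fintype.card κ := by
  have hSimg : #(S.image g) = #S :=
    card_image_of_injOn fun j hj j' _ h => by_contra fun hne => hS j hj j' hne h
  have hTimg : #T ≤ 2 * #(T.image g) := card_le_mul_card_image T 2 fun d _ => hT d
  have hdisj : Disjoint (S.image g) (T.image g) := by
    simp only [disjoint_left, mem_image, not_exists, not_and]
    rintro _ ⟨j, hj, rfl⟩ j' hj' he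
    exact hS j hj j' (fun h => disjoint_left.1 hST hj (h ▸ hj')) he.symm
  have := card_le_univ (S.image g ∪ T.image g)
  rw [card_union_of_disjoint hdisj] at this
  omega

theorem card_add_le_card_of_isBoxRep {ι κ : Type*} [Fintype ι] [DecidableEq ι] [Fintype κ]
    {n : ι → ℕ} {I : κ → Option ((Σ i, Fin (n i)) × Fin 2) → ℝ × ℝ} (hn : ∀ i, 1 ≤ n i)
    (hI : IsBoxRep (genMycielski (completeMultipartite fun i => Fin (n i)) 2) I) :
    #{j | n j ≠ 1} + (#{j | n j = 1} + 1) / 2 ≤ Fintype.card κ := by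
  classical
  -- `y j` is the level-`1` copy of `x j` if part `j` is a singleton, and another vertex of level
  -- `0` of part `j` otherwise.
  let x (j : ι) : Option ((Σ i, Fin (n i)) × Fin 2) := some (⟨j, ⟨0, hn j⟩⟩, 0)
  let t (j : ι) : Fin 2 := if n j = 1 then 1 else 0
  let y (j : ι) : Option ((Σ i, Fin (n i)) × Fin 2) :=
    some (⟨j, ⟨n j - 1, by have := hn j; omega⟩⟩, t j)
  have hxy : ∀ j, x j ≠ y j := by
    intro j h
    simp only [x, y, t, Option.some.injEq, Prod.mk.injEq, Sigma.mk.injEq, heq_eq_eq,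
      Fin.mk.injEq, true_and] at h
    split_ifs at h
    · exact absurd h.2 (by decide)
    · have := hn j
      omega
  choose g hg using fun j =>
    hI.separated (hxy j) fun h => (genMycielski_two_adj_some_some.1 h).1 rfl
  refine card_add_half_le_card (g := g) (disjoint_filter_filter_not _ _ _).symm ?_ ?_
  · intro j hj j' hjj' he
    have hy : t j = 0 := if_neg (mem_filter.1 hj).2
    apply hg j'
    rw [← he]
    refine hI.meets_of_common_neighbors (hg j) ?_ ?_ ?_ ?_ <;>
      simp only [x, y, hy] <;> exact (genMycielski_two_adj_zero hjj' _).symm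
  · -- in a common coordinate, two such pairs of singleton parts lie on opposite sides
    intro d
    let side (j : ι) : Bool := decide ((I d (x j)).2 < (I d (y j)).1)
    refine (card_le_card_of_injOn side (fun _ _ => mem_coe.2 (mem_univ _)) ?_).trans_eq rfl
    intro j hj j' hj' hside
    simp only [coe_filter, Set.mem_ofPred_eq, mem_filter, mem_univ, true_and] at hj hj'
    by_contra hne
    refine not_meets_of_same_side (hj.2 ▸ hg j) (hj'.2 ▸ hg j') (decide_eq_decide.1 hside) ?_ ?_
    · exact hI.meets (genMycielski_two_adj_zero hne _) d
    · exact hI.meets (genMycielski_two_adj_zero (Ne.symm hne) _) d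

/-- bounds on the boxicity of the Mycielski graph of a complete
`k`-partite graph with exactly `l` parts of size 1 (i.e. `l` focal vertices). -/
theorem boxicity_mycielski_completeMultipartite (k l : ℕ) (n : Fin k → ℕ)
    (hn : ∀ i, 1 ≤ n i)
    (hl : (Finset.univ.filter (fun i => n i = 1)).card = l) :
    (2 * k - l + 1) / 2 ≤
        boxicity (genMycielski (completeMultipartite (fun i => Fin (n i))) 2) ∧
    boxicity (genMycielski (completeMultipartite (fun i => Fin (n i))) 2) ≤
        min k ((2 * k - l + 1) / 2 + 1) ∧
    ((Odd l ∨ l = 0) →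
      boxicity (genMycielski (completeMultipartite (fun i => Fin (n i))) 2) =
        (2 * k - l + 1) / 2) := by
  set B := boxicity (genMycielski (completeMultipartite fun i => Fin (n i)) 2)
  have hsplit := card_filter_add_card_filter_not (s := univ) (fun i => n i = 1)
  rw [hl, card_univ, Fintype.card_fin] at hsplit
  have hk : HasBoxRep (genMycielski (completeMultipartite fun i => Fin (n i)) 2) k := by
    simpa using hasBoxRep_card (n := n)
  have hlower : k - l + (l + 1) / 2 ≤ B := le_boxicity hk fun m hm => by
    obtain ⟨I, hI⟩ := hm.exists_isBoxRep
    simpa [hl, ← hsplit] using card_add_le_card_of_isBoxRep hn hI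
  have hupper : 1 ≤ l → B ≤ k - l + l / 2 + 1 := fun hl₁ => by
    obtain ⟨a, b, c, hcover⟩ := exists_pairs_cover hl hl₁
    simpa [← hsplit] using
      boxicity_le (hasBoxRep_of_cover fun j hj => hcover j (by simpa using hj))
  have := boxicity_le hk
  rw [Nat.odd_iff]
  omega
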